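/- Soundness-completeness transfer: for a definite program P and query Q, P ⊨ Q if and only if Q is an instance of some SLD-computed answer for P and Q, i.e., there exists a substitution φ (computed answer) such that P ⊨ Qφ holds by SLD-derivation, all function symbols of φ occur in P or Q, and Q = Qφσ for some substitution σ. -/

import Mathlib

/-- First-order terms over function symbols `F` (each use records the number of
arguments), with variables indexed by `ℕ`. -/
inductive Tm (F : Type) : Type
  | var : ℕ → Tm F
  | app : F → (k : ℕ) → (Fin k → Tm F) → Tm F

namespace Tm

/-- Apply a substitution to a term. -/
def subst (σ : ℕ → Tm F) : Tm F → Tm F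
  | var n => σ n
  | app f k ts => app f k (fun i => (ts i).subst σ)

/-- Variables occurring in a term. -/
def vars : Tm F → Set ℕ
  | var n => {n}
  | app _ _ ts => ⋃ i, (ts i).vars

/-- Function symbols occurring in a term. -/
def symbols : Tm F → Set F
  | var _ => ∅
  | app f _ ts => {f} ∪ ⋃ i, (ts i).symbols

/-- Subterms of a term (including the term itself). -/
def subterms : Tm F → Set (Tm F)
  | var n => {var n}
  | app f k ts => {app f k ts} ∪ ⋃ i, (ts i).subterms

/-- The head (outermost) function symbol, if any. -/
def head? : Tm F → Option F
  | var _ => none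
  | app f _ _ => some f

def IsVar : Tm F → Prop
  | var _ => True
  | app _ _ _ => False

def isGround (t : Tm F) : Prop := t.vars = ∅

/-- Well-formedness w.r.t. an arity assignment: every function symbol is used
with exactly its arity. -/
def WF (ar : F → ℕ) : Tm F → Prop
  | var _ => True
  | app f k ts => k = ar f ∧ ∀ i, (ts i).WF ar

end Tm

/-- A term is an alien w.r.t. a set `S` of function symbols if it is a
non-variable term whose head symbol is not in `S`. -/
def IsAlien (S : Set F) (t : Tm F) : Prop :=
  ∃ f, t.head? = some f ∧ f ∉ S

/-- The substitution `{X/u}`. -/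
def sub1 (X : ℕ) (u : Tm F) : ℕ → Tm F := fun n => if n = X then u else .var n

/-- `σ` is the substitution `{V 0/t 0, …, V (k-1)/t (k-1)}`. -/
def FiniteSub (σ : ℕ → Tm F) (V : Fin k → ℕ) (t : Fin k → Tm F) : Prop :=
  (∀ i, σ (V i) = t i) ∧ ∀ n, (∀ i, V i ≠ n) → σ n = Tm.var n

/-- An atom: a predicate symbol applied to a list of terms. -/
structure Atom (F Pr : Type) where
  pred : Pr
  args : List (Tm F)

namespace Atom
def subst (σ : ℕ → Tm F) (A : Atom F Pr) : Atom F Pr := ⟨A.pred, A.args.map (Tm.subst σ)⟩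
def vars (A : Atom F Pr) : Set ℕ := { n | ∃ t ∈ A.args, n ∈ t.vars }
def symbols (A : Atom F Pr) : Set F := { f | ∃ t ∈ A.args, f ∈ t.symbols }
def isGround (A : Atom F Pr) : Prop := A.vars = ∅
def WFA (ar : F → ℕ) (A : Atom F Pr) : Prop := ∀ t ∈ A.args, t.WF ar
end Atom

/-- A definite clause `head ← body`. -/
structure Clause (F Pr : Type) where
  head : Atom F Pr
  body : List (Atom F Pr)

/-- A definite program: a set of definite clauses. -/
abbrev Program (F Pr : Type) := Set (Clause F Pr)

/-- A query: a conjunction (list) of atoms. -/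
abbrev Query (F Pr : Type) := List (Atom F Pr)

def Clause.subst (σ : ℕ → Tm F) (C : Clause F Pr) : Clause F Pr :=
  ⟨C.head.subst σ, C.body.map (Atom.subst σ)⟩

def Clause.symbols (C : Clause F Pr) : Set F :=
  C.head.symbols ∪ { f | ∃ A ∈ C.body, f ∈ A.symbols }

def Clause.vars (C : Clause F Pr) : Set ℕ :=
  C.head.vars ∪ { n | ∃ A ∈ C.body, n ∈ A.vars }

def Clause.WFC (ar : F → ℕ) (C : Clause F Pr) : Prop :=
  C.head.WFA ar ∧ ∀ A ∈ C.body, A.WFA ar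

def progSymbols (Pg : Program F Pr) : Set F := { f | ∃ C ∈ Pg, f ∈ C.symbols }

def ProgramWF (ar : F → ℕ) (Pg : Program F Pr) : Prop := ∀ C ∈ Pg, C.WFC ar

def querySymbols (Q : Query F Pr) : Set F := { f | ∃ A ∈ Q, f ∈ A.symbols }

def queryVars (Q : Query F Pr) : Set ℕ := { n | ∃ A ∈ Q, n ∈ A.vars }

def QueryWF (ar : F → ℕ) (Q : Query F Pr) : Prop := ∀ A ∈ Q, A.WFA ar

def substQuery (σ : ℕ → Tm F) (Q : Query F Pr) : Query F Pr := Q.map (Atom.subst σ)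

/-- A first-order interpretation (for a language without equality). -/
structure Interp (F Pr : Type) where
  dom : Type
  nonempty : Nonempty dom
  fn : F → (k : ℕ) → (Fin k → dom) → dom
  rel : Pr → List dom → Prop

namespace Interp

def eval (I : Interp F Pr) (ρ : ℕ → I.dom) : Tm F → I.dom
  | .var n => ρ n
  | .app f k ts => I.fn f k (fun i => I.eval ρ (ts i))

def holdsAtom (I : Interp F Pr) (ρ : ℕ → I.dom) (A : Atom F Pr) : Prop :=
  I.rel A.pred (A.args.map (I.eval ρ))

def holdsClause (I : Interp F Pr) (C : Clause F Pr) : Prop :=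
  ∀ ρ, (∀ B ∈ C.body, I.holdsAtom ρ B) → I.holdsAtom ρ C.head

def isModel (I : Interp F Pr) (Pg : Program F Pr) : Prop := ∀ C ∈ Pg, I.holdsClause C

end Interp

/-- `P ⊨ Q`: logical consequence of the universal closure of the query. -/
def Entails (Pg : Program F Pr) (Q : Query F Pr) : Prop :=
  ∀ I : Interp F Pr, I.isModel Pg → ∀ ρ, ∀ A ∈ Q, I.holdsAtom ρ A

/-- A substitution mapping every variable to a ground term. -/
def GroundSub (σ : ℕ → Tm F) : Prop := ∀ n, (σ n).isGround

/-- A grounding substitution by well-formed ground terms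
(terms of the Herbrand universe for arities `ar`). -/
def WFGroundSub (ar : F → ℕ) (σ : ℕ → Tm F) : Prop :=
  ∀ n, (σ n).isGround ∧ (σ n).WF ar

/-- A Herbrand interpretation (set of ground atoms) that is a model of `Pg`. -/
def IsHerbrandModel (Pg : Program F Pr) (S : Set (Atom F Pr)) : Prop :=
  ∀ C ∈ Pg, ∀ σ : ℕ → Tm F, GroundSub σ →
    (∀ B ∈ C.body, B.subst σ ∈ S) → C.head.subst σ ∈ S

/-- The least Herbrand model `M_P`. -/
def leastHerbrand (Pg : Program F Pr) : Set (Atom F Pr) :=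
  ⋂₀ { S | IsHerbrandModel Pg S }

/-- `M_P ⊨ Q`: every ground instance of `Q` is true in the least Herbrand model. -/
def HoldsInM (Pg : Program F Pr) (Q : Query F Pr) : Prop :=
  ∀ σ : ℕ → Tm F, GroundSub σ → ∀ A ∈ Q, A.subst σ ∈ leastHerbrand Pg

/-- A Herbrand model over the Herbrand universe of well-formed ground terms. -/
def IsHerbrandModelWF (ar : F → ℕ) (Pg : Program F Pr) (S : Set (Atom F Pr)) : Prop :=
  ∀ C ∈ Pg, ∀ σ : ℕ → Tm F, WFGroundSub ar σ →
    (∀ B ∈ C.body, B.subst σ ∈ S) → C.head.subst σ ∈ S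

/-- The least Herbrand model `M_P` (over well-formed ground terms). -/
def leastHerbrandWF (ar : F → ℕ) (Pg : Program F Pr) : Set (Atom F Pr) :=
  ⋂₀ { S | IsHerbrandModelWF ar Pg S }

/-- `M_P ⊨ Q`, where ground instances are taken over the Herbrand universe of
well-formed ground terms. -/
def HoldsInMWF (ar : F → ℕ) (Pg : Program F Pr) (Q : Query F Pr) : Prop :=
  ∀ σ : ℕ → Tm F, WFGroundSub ar σ → ∀ A ∈ Q, A.subst σ ∈ leastHerbrandWF ar Pg

/-- The query contains no aliens w.r.t. `S` (no subterm of it is an alien). -/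
def QueryNoAliens (S : Set F) (Q : Query F Pr) : Prop :=
  ∀ A ∈ Q, ∀ t ∈ A.args, ∀ s ∈ t.subterms, ¬ IsAlien S s

/-- `Q'` is `Q` generalized for `S`: `Q'` contains no aliens w.r.t. `S` and `Q` is
obtained from `Q'` by a substitution (with domain among the variables of `Q'`)
mapping distinct variables to pairwise distinct aliens w.r.t. `S`. -/
def IsGenQuery (S : Set F) (Q' Q : Query F Pr) : Prop :=
  QueryNoAliens S Q' ∧
  ∃ (k : ℕ) (V : Fin k → ℕ) (t : Fin k → Tm F) (σ : ℕ → Tm F),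
    Function.Injective V ∧ Function.Injective t ∧ (∀ i, IsAlien S (t i)) ∧
    FiniteSub σ V t ∧ (∀ i, V i ∈ queryVars Q') ∧ Q = substQuery σ Q'

/-- Composition of substitutions. -/
def compSub {F : Type} (σ τ : ℕ → Tm F) : ℕ → Tm F := fun n => (σ n).subst τ

def UnifiesAtom {F Pr : Type} (θ : ℕ → Tm F) (A B : Atom F Pr) : Prop :=
  A.subst θ = B.subst θ

/-- A relevant most general unifier of two atoms. -/
def IsMGUAtom {F Pr : Type} (A B : Atom F Pr) (θ : ℕ → Tm F) : Prop :=
  UnifiesAtom θ A B ∧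
  (∀ τ, UnifiesAtom τ A B → ∃ δ, τ = compSub θ δ) ∧
  ∀ n, n ∉ A.vars ∪ B.vars → θ n = Tm.var n

def IsRenaming {F : Type} (ρ : ℕ → Tm F) : Prop :=
  ∃ π : ℕ → ℕ, Function.Injective π ∧ ρ = fun n => Tm.var (π n)

/-- `SLDAnswer Pg Q φ`: there is a successful SLD-derivation (leftmost selection rule)
for `Pg` and `Q`, using clauses renamed apart from the current goal, whose computed
substitution (the composition of the mgus along the derivation) is `φ`. -/
inductive SLDAnswer {F Pr : Type} (Pg : Program F Pr) : Query F Pr → (ℕ → Tm F) → Prop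
  | success : SLDAnswer Pg [] Tm.var
  | step (A : Atom F Pr) (G : Query F Pr) (C : Clause F Pr) (ρ θ φ : ℕ → Tm F) :
      C ∈ Pg → IsRenaming ρ →
      Clause.vars (C.subst ρ) ∩ queryVars (A :: G) = ∅ →
      IsMGUAtom A (C.subst ρ).head θ →
      SLDAnswer Pg (substQuery θ ((C.subst ρ).body ++ G)) φ →
      SLDAnswer Pg (A :: G) (compSub θ φ)


/-! ## Auxiliary development for the proof -/

variable {F Pr : Type}

namespace Tm

theorem subst_subst (σ τ : ℕ → Tm F) (t : Tm F) :
    (t.subst σ).subst τ = t.subst (compSub σ τ) := by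
  induction t with
  | var n => rfl
  | app f k ts ih => simp only [subst]; exact congrArg _ (funext fun i => ih i)

theorem subst_congr {σ τ : ℕ → Tm F} {t : Tm F} (h : ∀ n ∈ t.vars, σ n = τ n) :
    t.subst σ = t.subst τ := by
  induction t with
  | var n => exact h n (by simp [vars])
  | app f k ts ih =>
    simp only [subst]
    exact congrArg _ (funext fun i => ih i fun n hn => h n (by simp [vars]; exact ⟨i, hn⟩))

theorem subst_var (t : Tm F) : t.subst Tm.var = t := by
  induction t with
  | var n => rfl
  | app f k ts ih => simp only [subst]; exact congrArg _ (funext fun i => ih i)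

theorem vars_subst (σ : ℕ → Tm F) (t : Tm F) :
    (t.subst σ).vars = ⋃ n ∈ t.vars, (σ n).vars := by
  induction t with
  | var n => simp [subst, vars]
  | app f k ts ih =>
    simp only [subst, vars, ih]
    ext m; simp; tauto

theorem symbols_subst (σ : ℕ → Tm F) (t : Tm F) :
    (t.subst σ).symbols ⊆ t.symbols ∪ ⋃ n ∈ t.vars, (σ n).symbols := by
  induction t with
  | var n => intro f hf; simp [vars]; right; exact hf
  | app f k ts ih =>
    intro g hg
    have hg' : g ∈ ({f} : Set F) ∪ ⋃ i, ((ts i).subst σ).symbols := hg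
    rcases hg' with h | h
    · exact Or.inl (Or.inl h)
    · obtain ⟨i, hi⟩ := Set.mem_iUnion.1 h
      rcases ih i hi with h | h
      · exact Or.inl (Or.inr (Set.mem_iUnion.2 ⟨i, h⟩))
      · obtain ⟨n, hn, hfn⟩ := Set.mem_iUnion₂.1 h
        exact Or.inr (Set.mem_iUnion₂.2 ⟨n, Set.mem_iUnion.2 ⟨i, hn⟩, hfn⟩)

end Tm

namespace Atom

theorem subst_subst (σ τ : ℕ → Tm F) (A : Atom F Pr) :
    (A.subst σ).subst τ = A.subst (compSub σ τ) := by
  simp [Atom.subst, List.map_map, Function.comp_def, Tm.subst_subst]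

theorem subst_congr {σ τ : ℕ → Tm F} {A : Atom F Pr} (h : ∀ n ∈ A.vars, σ n = τ n) :
    A.subst σ = A.subst τ := by
  simp only [Atom.subst, mk.injEq, true_and]
  refine List.map_congr_left fun t ht => Tm.subst_congr fun n hn => h n ⟨t, ht, hn⟩

theorem subst_var (A : Atom F Pr) : A.subst Tm.var = A := by
  have : ∀ l : List (Tm F), List.map (Tm.subst Tm.var) l = l := by
    intro l; induction l with
    | nil => rfl
    | cons t l ih => simp [Tm.subst_var, ih]
  cases A; simp [Atom.subst, this]

theorem vars_subst {σ : ℕ → Tm F} {A : Atom F Pr} :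
    (A.subst σ).vars = ⋃ n ∈ A.vars, (σ n).vars := by
  ext m
  constructor
  · rintro ⟨u, hu, hm⟩
    obtain ⟨t, ht, rfl⟩ := List.mem_map.1 hu
    rw [Tm.vars_subst] at hm
    obtain ⟨n, hn, hmn⟩ := Set.mem_iUnion₂.1 hm
    exact Set.mem_iUnion₂.2 ⟨n, ⟨t, ht, hn⟩, hmn⟩
  · intro hm
    obtain ⟨n, hn, hmn⟩ := Set.mem_iUnion₂.1 hm
    obtain ⟨t, ht, hnt⟩ := hn
    refine ⟨t.subst σ, List.mem_map.2 ⟨t, ht, rfl⟩, ?_⟩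
    rw [Tm.vars_subst]
    exact Set.mem_iUnion₂.2 ⟨n, hnt, hmn⟩

theorem symbols_subst {σ : ℕ → Tm F} {A : Atom F Pr} :
    (A.subst σ).symbols ⊆ A.symbols ∪ ⋃ n ∈ A.vars, (σ n).symbols := by
  rintro f ⟨u, hu, hf⟩
  obtain ⟨t, ht, rfl⟩ := List.mem_map.1 hu
  rcases Tm.symbols_subst σ t hf with h | h
  · exact Or.inl ⟨t, ht, h⟩
  · obtain ⟨n, hn, hfn⟩ := Set.mem_iUnion₂.1 h
    exact Or.inr (Set.mem_iUnion₂.2 ⟨n, ⟨t, ht, hn⟩, hfn⟩)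

end Atom

theorem substQuery_subst (σ τ : ℕ → Tm F) (Q : Query F Pr) :
    substQuery τ (substQuery σ Q) = substQuery (compSub σ τ) Q := by
  simp [substQuery, List.map_map, Function.comp_def, Atom.subst_subst]

theorem substQuery_congr {σ τ : ℕ → Tm F} {Q : Query F Pr}
    (h : ∀ n ∈ queryVars Q, σ n = τ n) : substQuery σ Q = substQuery τ Q := by
  refine List.map_congr_left fun A hA => Atom.subst_congr fun n hn => h n ⟨A, hA, hn⟩

theorem substQuery_var (Q : Query F Pr) : substQuery Tm.var Q = Q := by
  have : ∀ l : Query F Pr, List.map (Atom.subst Tm.var) l = l := by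
    intro l; induction l with
    | nil => rfl
    | cons t l ih => simp [Atom.subst_var, ih]
  exact this Q

theorem queryVars_subst {σ : ℕ → Tm F} {Q : Query F Pr} :
    queryVars (substQuery σ Q) = ⋃ n ∈ queryVars Q, (σ n).vars := by
  ext m
  constructor
  · rintro ⟨B, hB, hm⟩
    obtain ⟨A, hA, rfl⟩ := List.mem_map.1 hB
    rw [Atom.vars_subst] at hm
    obtain ⟨n, hn, hmn⟩ := Set.mem_iUnion₂.1 hm
    exact Set.mem_iUnion₂.2 ⟨n, ⟨A, hA, hn⟩, hmn⟩
  · intro hm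
    obtain ⟨n, hn, hmn⟩ := Set.mem_iUnion₂.1 hm
    obtain ⟨A, hA, hnA⟩ := hn
    refine ⟨A.subst σ, List.mem_map.2 ⟨A, hA, rfl⟩, ?_⟩
    rw [Atom.vars_subst]
    exact Set.mem_iUnion₂.2 ⟨n, hnA, hmn⟩

theorem querySymbols_subst {σ : ℕ → Tm F} {Q : Query F Pr} :
    querySymbols (substQuery σ Q) ⊆ querySymbols Q ∪ ⋃ n ∈ queryVars Q, (σ n).symbols := by
  rintro f ⟨B, hB, hf⟩
  obtain ⟨A, hA, rfl⟩ := List.mem_map.1 hB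
  rcases Atom.symbols_subst hf with h | h
  · exact Or.inl ⟨A, hA, h⟩
  · obtain ⟨n, hn, hfn⟩ := Set.mem_iUnion₂.1 h
    exact Or.inr (Set.mem_iUnion₂.2 ⟨n, ⟨A, hA, hn⟩, hfn⟩)

/-! ### Evaluation lemmas and soundness -/

theorem Interp.eval_subst (I : Interp F Pr) (ρ : ℕ → I.dom) (σ : ℕ → Tm F) (t : Tm F) :
    I.eval ρ (t.subst σ) = I.eval (fun n => I.eval ρ (σ n)) t := by
  induction t with
  | var n => rfl
  | app f k ts ih => simp only [Tm.subst, Interp.eval]; exact congrArg _ (funext fun i => ih i)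

theorem Interp.holdsAtom_subst (I : Interp F Pr) (ρ : ℕ → I.dom) (σ : ℕ → Tm F)
    (A : Atom F Pr) :
    I.holdsAtom ρ (A.subst σ) ↔ I.holdsAtom (fun n => I.eval ρ (σ n)) A := by
  simp [Interp.holdsAtom, Atom.subst, List.map_map, Function.comp_def, Interp.eval_subst]

theorem Entails.subst {Pg : Program F Pr} {Q : Query F Pr} (h : Entails Pg Q)
    (σ : ℕ → Tm F) : Entails Pg (substQuery σ Q) := by
  intro I hI ρ A hA
  obtain ⟨B, hB, rfl⟩ := List.mem_map.1 hA
  rw [Interp.holdsAtom_subst]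
  exact h I hI _ B hB

theorem SLDAnswer.sound {Pg : Program F Pr} {Q : Query F Pr} {φ : ℕ → Tm F}
    (h : SLDAnswer Pg Q φ) : Entails Pg (substQuery φ Q) := by
  induction h with
  | success => intro I hI ρ A hA; simp [substQuery] at hA
  | step A G C ρ θ φ hC hρ hdisj hmgu hSLD ih =>
    intro I hI ρ₀ B hB
    simp only [substQuery, List.map_cons, List.mem_cons] at hB
    have ihmem : ∀ X ∈ (C.subst ρ).body ++ G, I.holdsAtom ρ₀ ((X.subst θ).subst φ) := by
      intro X hX
      have : (X.subst θ).subst φ ∈ substQuery φ (substQuery θ ((C.subst ρ).body ++ G)) := by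
        exact List.mem_map.2 ⟨X.subst θ, List.mem_map.2 ⟨X, hX, rfl⟩, rfl⟩
      exact ih I hI ρ₀ _ this
    rcases hB with hB | hB
    · -- B is A under compSub θ φ
      subst hB
      rw [show A.subst (compSub θ φ) = (A.subst θ).subst φ from (Atom.subst_subst θ φ A).symm]
      rw [hmgu.1]
      -- use the clause
      have hcl := hI C hC
      have hbody : ∀ X ∈ C.body, I.holdsAtom (fun n => I.eval ρ₀ ((compSub ρ (compSub θ φ)) n)) X := by
        intro X hX
        rw [← Interp.holdsAtom_subst]
        have : X.subst (compSub ρ (compSub θ φ)) = ((X.subst ρ).subst θ).subst φ := by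
          rw [Atom.subst_subst, Atom.subst_subst]
        rw [this]
        exact ihmem (X.subst ρ) (List.mem_append.2 (Or.inl (List.mem_map.2 ⟨X, hX, rfl⟩)))
      have hhead := hcl _ hbody
      rw [← Interp.holdsAtom_subst] at hhead
      have : C.head.subst (compSub ρ (compSub θ φ)) = ((C.head.subst ρ).subst θ).subst φ := by
        rw [Atom.subst_subst, Atom.subst_subst]
      rw [this] at hhead
      exact hhead
    · obtain ⟨X, hX, rfl⟩ := List.mem_map.1 hB
      rw [show X.subst (compSub θ φ) = (X.subst θ).subst φ from (Atom.subst_subst θ φ X).symm]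
      exact ihmem X (List.mem_append.2 (Or.inr hX))

/-! ### Ground-style success with size -/

inductive QSucc (Pg : Program F Pr) : Query F Pr → ℕ → Prop
  | nil : QSucc Pg [] 0
  | cons {A : Atom F Pr} {G : Query F Pr} {C : Clause F Pr} {δ : ℕ → Tm F} {m n : ℕ} :
      C ∈ Pg → C.head.subst δ = A → QSucc Pg (substQuery δ C.body) m →
      QSucc Pg G n → QSucc Pg (A :: G) (m + n + 1)

theorem QSucc.append {Pg : Program F Pr} {Q₁ Q₂ : Query F Pr} {m n : ℕ}
    (h₁ : QSucc Pg Q₁ m) (h₂ : QSucc Pg Q₂ n) : QSucc Pg (Q₁ ++ Q₂) (m + n) := by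
  induction h₁ with
  | nil => simpa using h₂
  | @cons A G C δ m' n' hC hh hb hg ihb ihg =>
    have := QSucc.cons hC hh hb ihg
    have heq : m' + (n' + n) + 1 = m' + n' + 1 + n := by omega
    rw [heq] at this
    exact this

/-- The term interpretation used for completeness. -/
def termInterp (Pg : Program F Pr) : Interp F Pr where
  dom := Tm F
  nonempty := ⟨Tm.var 0⟩
  fn := fun f k ts => Tm.app f k ts
  rel := fun p ts => ∃ n, QSucc Pg [⟨p, ts⟩] n

theorem termInterp_eval (Pg : Program F Pr) (ρ : ℕ → Tm F) (t : Tm F) :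
    (termInterp Pg).eval ρ t = t.subst ρ := by
  induction t with
  | var n => rfl
  | app f k ts ih =>
    simp only [Interp.eval, Tm.subst]
    exact congrArg _ (funext fun i => ih i)

theorem termInterp_holdsAtom (Pg : Program F Pr) (ρ : ℕ → Tm F) (A : Atom F Pr) :
    (termInterp Pg).holdsAtom ρ A ↔ ∃ n, QSucc Pg [A.subst ρ] n := by
  have : A.subst ρ = ⟨A.pred, A.args.map (Tm.subst ρ)⟩ := rfl
  rw [this]
  simp only [Interp.holdsAtom]
  have : List.map ((termInterp Pg).eval ρ) A.args = List.map (Tm.subst ρ) A.args := by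
    exact List.map_congr_left fun t _ => termInterp_eval Pg ρ t
  rw [this]
  exact Iff.rfl

theorem termInterp_model (Pg : Program F Pr) : (termInterp Pg).isModel Pg := by
  intro C hC ρ hbody
  rw [termInterp_holdsAtom Pg ρ]
  -- bodies succeed
  have : ∀ l : List (Atom F Pr), (∀ B ∈ l, B ∈ C.body) → ∃ m, QSucc Pg (substQuery ρ l) m := by
    intro l
    induction l with
    | nil => exact fun _ => ⟨0, QSucc.nil⟩
    | cons B l ih =>
      intro hl
      obtain ⟨m, hm⟩ := ih fun X hX => hl X (List.mem_cons_of_mem _ hX)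
      have hB := hbody B (hl B (List.mem_cons_self))
      rw [termInterp_holdsAtom Pg ρ] at hB
      obtain ⟨mB, hmB⟩ := hB
      exact ⟨mB + m, by simpa [substQuery] using hmB.append hm⟩
  obtain ⟨m, hm⟩ := this C.body (fun _ h => h)
  exact ⟨m + 0 + 1, QSucc.cons hC rfl hm QSucc.nil⟩

theorem entails_qsucc {Pg : Program F Pr} {Q : Query F Pr} (h : Entails Pg Q) :
    ∃ N, QSucc Pg Q N := by
  have key : ∀ A ∈ Q, ∃ n, QSucc Pg [A] n := by
    intro A hA
    have := h (termInterp Pg) (termInterp_model Pg) Tm.var A hA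
    rw [termInterp_holdsAtom, Atom.subst_var] at this
    exact this
  induction Q with
  | nil => exact ⟨0, QSucc.nil⟩
  | cons A G ih =>
    obtain ⟨n, hn⟩ := ih (fun I hI ρ B hB => h I hI ρ B (List.mem_cons_of_mem _ hB))
      (fun B hB => key B (List.mem_cons_of_mem _ hB))
    obtain ⟨m, hm⟩ := key A (List.mem_cons_self)
    exact ⟨m + n, by simpa using hm.append hn⟩

/-! ### Sizes, finite variable sets, bounds -/

namespace Tm

def tsize : Tm F → ℕ
  | var _ => 1
  | app _ _ ts => 1 + ∑ i, tsize (ts i)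

def fvars : Tm F → Finset ℕ
  | var n => {n}
  | app _ _ ts => Finset.univ.biUnion fun i => fvars (ts i)

theorem mem_fvars {n : ℕ} {t : Tm F} : n ∈ t.fvars ↔ n ∈ t.vars := by
  induction t with
  | var m => simp [fvars, vars]
  | app f k ts ih =>
    simp only [fvars, vars, Finset.mem_biUnion, Finset.mem_univ, true_and, Set.mem_iUnion]
    exact exists_congr fun i => ih i

theorem one_le_tsize (t : Tm F) : 1 ≤ t.tsize := by
  cases t <;> simp [tsize]

theorem tsize_subst_app (σ : ℕ → Tm F) (f : F) (k : ℕ) (ts : Fin k → Tm F) :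
    ((app f k ts).subst σ).tsize = 1 + ∑ i, ((ts i).subst σ).tsize := rfl

theorem occurs_le {X : ℕ} {t : Tm F} (h : X ∈ t.vars) (τ : ℕ → Tm F) :
    (τ X).tsize ≤ (t.subst τ).tsize := by
  induction t with
  | var n =>
    have hx : X = n := h
    subst hx; exact le_refl _
  | app f k ts ih =>
    obtain ⟨i, hi⟩ := Set.mem_iUnion.1 h
    calc (τ X).tsize ≤ ((ts i).subst τ).tsize := ih i hi
      _ ≤ ∑ j, ((ts j).subst τ).tsize :=
        Finset.single_le_sum (f := fun j => ((ts j).subst τ).tsize)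
          (fun j _ => Nat.zero_le _) (Finset.mem_univ i)
      _ ≤ 1 + ∑ j, ((ts j).subst τ).tsize := Nat.le_add_left _ _

theorem occurs_lt {X : ℕ} {t : Tm F} (h : X ∈ t.vars) (hne : t ≠ Tm.var X) (τ : ℕ → Tm F) :
    (τ X).tsize < (t.subst τ).tsize := by
  cases t with
  | var n =>
    have hx : X = n := h
    subst hx
    exact absurd rfl hne
  | app f k ts =>
    obtain ⟨i, hi⟩ := Set.mem_iUnion.1 h
    calc (τ X).tsize ≤ ((ts i).subst τ).tsize := occurs_le hi τ
      _ ≤ ∑ j, ((ts j).subst τ).tsize :=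
        Finset.single_le_sum (f := fun j => ((ts j).subst τ).tsize)
          (fun j _ => Nat.zero_le _) (Finset.mem_univ i)
      _ < 1 + ∑ j, ((ts j).subst τ).tsize := Nat.lt_one_add_iff.2 (le_refl _)

/-- Bound on variables. -/
def tbound : Tm F → ℕ
  | var n => n + 1
  | app _ _ ts => Finset.univ.sup fun i => tbound (ts i)

theorem lt_tbound {n : ℕ} {t : Tm F} (h : n ∈ t.vars) : n < t.tbound := by
  induction t with
  | var m =>
    have hx : n = m := h
    subst hx; exact Nat.lt_succ_self n
  | app f k ts ih =>
    obtain ⟨i, hi⟩ := Set.mem_iUnion.1 h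
    exact lt_of_lt_of_le (ih i hi)
      (Finset.le_sup (f := fun i => (ts i).tbound) (Finset.mem_univ i))

theorem subst_eq_of_notmem {X : ℕ} {t u : Tm F} (h : X ∉ t.vars) :
    t.subst (sub1 X u) = t := by
  have : t.subst (sub1 X u) = t.subst Tm.var :=
    subst_congr fun n hn => by
      have : n ≠ X := fun e => h (e ▸ hn)
      simp [sub1, this]
  rw [this, subst_var]

end Tm

/-- Max over a list of naturals. -/
def lmax (l : List ℕ) : ℕ := l.foldr max 0

theorem le_lmax {x : ℕ} {l : List ℕ} (h : x ∈ l) : x ≤ lmax l := by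
  induction l with
  | nil => cases h
  | cons a l ih =>
    rcases List.mem_cons.1 h with rfl | h
    · exact le_max_left _ _
    · exact le_trans (ih h) (le_max_right _ _)

def abound (A : Atom F Pr) : ℕ := lmax (A.args.map Tm.tbound)

theorem lt_abound {n : ℕ} {A : Atom F Pr} (h : n ∈ A.vars) : n < abound A := by
  obtain ⟨t, ht, hn⟩ := h
  exact lt_of_lt_of_le (Tm.lt_tbound hn) (le_lmax (List.mem_map.2 ⟨t, ht, rfl⟩))

def qbound (Q : Query F Pr) : ℕ := lmax (Q.map abound)

theorem lt_qbound {n : ℕ} {Q : Query F Pr} (h : n ∈ queryVars Q) : n < qbound Q := by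
  obtain ⟨A, hA, hn⟩ := h
  exact lt_of_lt_of_le (lt_abound hn) (le_lmax (List.mem_map.2 ⟨A, hA, rfl⟩))

def cbound (C : Clause F Pr) : ℕ := max (abound C.head) (qbound C.body)

theorem lt_cbound {n : ℕ} {C : Clause F Pr} (h : n ∈ C.vars) : n < cbound C := by
  rcases h with h | h
  · exact lt_of_lt_of_le (lt_abound h) (le_max_left _ _)
  · obtain ⟨A, hA, hn⟩ := h
    exact lt_of_lt_of_le (lt_qbound ⟨A, hA, hn⟩) (le_max_right _ _)

/-! ### Unification -/

def Esolve (θ : ℕ → Tm F) (E : List (Tm F × Tm F)) : Prop :=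
  ∀ p ∈ E, (p.1).subst θ = (p.2).subst θ

def Evars (E : List (Tm F × Tm F)) : Finset ℕ :=
  E.foldr (fun p s => p.1.fvars ∪ p.2.fvars ∪ s) ∅

def Esize (E : List (Tm F × Tm F)) : ℕ := (E.map fun p => p.1.tsize + p.2.tsize).sum

def Esyms (E : List (Tm F × Tm F)) : Set F := {f | ∃ p ∈ E, f ∈ p.1.symbols ∪ p.2.symbols}

theorem mem_Evars {n : ℕ} {E : List (Tm F × Tm F)} :
    n ∈ Evars E ↔ ∃ p ∈ E, n ∈ p.1.vars ∨ n ∈ p.2.vars := by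
  induction E with
  | nil => simp [Evars]
  | cons p E ih =>
    show n ∈ p.1.fvars ∪ p.2.fvars ∪ Evars E ↔ _
    simp only [Finset.mem_union, Tm.mem_fvars, ih, List.mem_cons]
    constructor
    · rintro ((h | h) | ⟨q, hq, hc⟩)
      · exact ⟨p, Or.inl rfl, Or.inl h⟩
      · exact ⟨p, Or.inl rfl, Or.inr h⟩
      · exact ⟨q, Or.inr hq, hc⟩
    · rintro ⟨q, (rfl | hq), hc⟩
      · exact Or.inl hc
      · exact Or.inr ⟨q, hq, hc⟩

theorem Esize_cons (p : Tm F × Tm F) (E : List (Tm F × Tm F)) :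
    Esize (p :: E) = p.1.tsize + p.2.tsize + Esize E := by
  simp [Esize]

/-- The conclusion package of the unification theorem. -/
def UOK (E : List (Tm F × Tm F)) (θ : ℕ → Tm F) : Prop :=
  Esolve θ E ∧ (∀ τ, Esolve τ E → ∀ n, (θ n).subst τ = τ n) ∧
  (∀ n, n ∉ Evars E → θ n = Tm.var n) ∧
  (∀ n, (θ n).vars ⊆ ↑(Evars E) ∪ {n}) ∧
  (∀ n, (θ n).symbols ⊆ Esyms E)

theorem Esolve_swap {a b : Tm F} {E : List (Tm F × Tm F)} {θ : ℕ → Tm F} :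
    Esolve θ ((a, b) :: E) ↔ Esolve θ ((b, a) :: E) := by
  constructor <;>
    · intro h p hp
      rcases List.mem_cons.1 hp with rfl | hp
      · exact (h _ (List.mem_cons_self)).symm
      · exact h p (List.mem_cons_of_mem _ hp)

theorem Evars_swap {a b : Tm F} {E : List (Tm F × Tm F)} :
    Evars ((a, b) :: E) = Evars ((b, a) :: E) := by
  show a.fvars ∪ b.fvars ∪ Evars E = b.fvars ∪ a.fvars ∪ Evars E
  rw [Finset.union_comm a.fvars]

theorem Esyms_swap {a b : Tm F} {E : List (Tm F × Tm F)} :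
    Esyms ((a, b) :: E) = Esyms ((b, a) :: E) := by
  ext f
  simp only [Esyms, Set.mem_setOf_eq, List.mem_cons, Set.mem_union]
  constructor
  · rintro ⟨p, (rfl | hp), hc⟩
    · exact ⟨(b, a), Or.inl rfl, hc.symm⟩
    · exact ⟨p, Or.inr hp, hc⟩
  · rintro ⟨p, (rfl | hp), hc⟩
    · exact ⟨(a, b), Or.inl rfl, hc.symm⟩
    · exact ⟨p, Or.inr hp, hc⟩

theorem UOK.swap {a b : Tm F} {E : List (Tm F × Tm F)} {θ : ℕ → Tm F}
    (h : UOK ((a, b) :: E) θ) : UOK ((b, a) :: E) θ := by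
  obtain ⟨hs, hf, hrel, hv, hsym⟩ := h
  exact ⟨Esolve_swap.1 hs, fun τ hτ => hf τ (Esolve_swap.2 hτ),
    fun n hn => hrel n (Evars_swap ▸ hn), fun n => Evars_swap ▸ hv n,
    fun n => Esyms_swap ▸ hsym n⟩

theorem bind_case {X : ℕ} {u : Tm F} {E' : List (Tm F × Tm F)}
    (hocc : X ∉ u.vars)
    (hsolv : ∃ τ, Esolve τ ((Tm.var X, u) :: E'))
    (IH : ∀ E₁ : List (Tm F × Tm F), (Evars E₁).card < (Evars ((Tm.var X, u) :: E')).card →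
      (∃ τ, Esolve τ E₁) → ∃ θ, UOK E₁ θ) :
    ∃ θ, UOK ((Tm.var X, u) :: E') θ := by
  classical
  set E : List (Tm F × Tm F) := (Tm.var X, u) :: E' with hE
  set θ₁ : ℕ → Tm F := sub1 X u with hθ₁
  set E₁ : List (Tm F × Tm F) := E'.map fun p => (p.1.subst θ₁, p.2.subst θ₁) with hE₁
  have f0 : X ∈ Evars E := mem_Evars.2 ⟨(Tm.var X, u), List.mem_cons_self, Or.inl rfl⟩
  have hθ₁X : θ₁ X = u := by simp [hθ₁, sub1]
  have hθ₁n : ∀ n, n ≠ X → θ₁ n = Tm.var n := fun n hn => by simp [hθ₁, sub1, hn]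
  have f1 : ∀ τ, Esolve τ E → compSub θ₁ τ = τ := by
    intro τ hτ
    funext n
    by_cases hn : n = X
    · subst hn
      have := hτ (Tm.var n, u) (List.mem_cons_self)
      simp only [Tm.subst] at this
      show (θ₁ n).subst τ = τ n
      rw [hθ₁X]; exact this.symm
    · show (θ₁ n).subst τ = τ n
      rw [hθ₁n n hn]; rfl
  have f2 : ∀ τ, Esolve τ E → Esolve τ E₁ := by
    intro τ hτ p hp
    obtain ⟨q, hq, rfl⟩ := List.mem_map.1 hp
    show (q.1.subst θ₁).subst τ = (q.2.subst θ₁).subst τ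
    rw [Tm.subst_subst, Tm.subst_subst, f1 τ hτ]
    exact hτ q (List.mem_cons_of_mem _ hq)
  have f3 : ∃ τ, Esolve τ E₁ := hsolv.imp fun τ hτ => f2 τ hτ
  have fu : u.vars ⊆ ↑(Evars E) := fun n hn =>
    mem_Evars.2 ⟨(Tm.var X, u), List.mem_cons_self, Or.inr hn⟩
  have f4 : Evars E₁ ⊆ (Evars E).erase X := by
    intro n hn
    obtain ⟨p, hp, hc⟩ := mem_Evars.1 hn
    obtain ⟨q, hq, rfl⟩ := List.mem_map.1 hp
    have key : ∀ t : Tm F, n ∈ (t.subst θ₁).vars →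
        (n ≠ X ∧ (n ∈ t.vars ∨ n ∈ u.vars)) := by
      intro t ht
      rw [Tm.vars_subst] at ht
      obtain ⟨k, hk, hnk⟩ := Set.mem_iUnion₂.1 ht
      by_cases hkX : k = X
      · subst hkX
        rw [hθ₁X] at hnk
        exact ⟨fun e => hocc (e ▸ hnk), Or.inr hnk⟩
      · rw [hθ₁n k hkX] at hnk
        have : n = k := hnk
        subst this
        exact ⟨hkX, Or.inl hk⟩
    have : n ≠ X ∧ (n ∈ q.1.vars ∨ n ∈ q.2.vars ∨ n ∈ u.vars) := by
      rcases hc with h | h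
      · obtain ⟨h1, h2⟩ := key q.1 h; exact ⟨h1, h2.imp_right Or.inr⟩
      · obtain ⟨h1, h2⟩ := key q.2 h
        exact ⟨h1, h2.elim (fun h => Or.inr (Or.inl h)) (fun h => Or.inr (Or.inr h))⟩
    refine Finset.mem_erase.2 ⟨this.1, ?_⟩
    rcases this.2 with h | h | h
    · exact mem_Evars.2 ⟨q, List.mem_cons_of_mem _ hq, Or.inl h⟩
    · exact mem_Evars.2 ⟨q, List.mem_cons_of_mem _ hq, Or.inr h⟩
    · exact fu h
  have f5 : (Evars E₁).card < (Evars E).card :=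
    lt_of_le_of_lt (Finset.card_le_card f4) (Finset.card_erase_lt_of_mem f0)
  have fusym : u.symbols ⊆ Esyms E := fun f hf =>
    ⟨(Tm.var X, u), List.mem_cons_self, Or.inr hf⟩
  have f6 : Esyms E₁ ⊆ Esyms E := by
    rintro f ⟨p, hp, hc⟩
    obtain ⟨q, hq, rfl⟩ := List.mem_map.1 hp
    have key : ∀ t : Tm F, f ∈ (t.subst θ₁).symbols → f ∈ t.symbols ∪ u.symbols := by
      intro t ht
      rcases Tm.symbols_subst θ₁ t ht with h | h
      · exact Or.inl h
      · obtain ⟨k, hk, hfk⟩ := Set.mem_iUnion₂.1 h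
        by_cases hkX : k = X
        · subst hkX; rw [hθ₁X] at hfk; exact Or.inr hfk
        · rw [hθ₁n k hkX] at hfk; exact absurd hfk (by simp [Tm.symbols])
    rcases hc with h | h
    · rcases key q.1 h with h | h
      · exact ⟨q, List.mem_cons_of_mem _ hq, Or.inl h⟩
      · exact fusym h
    · rcases key q.2 h with h | h
      · exact ⟨q, List.mem_cons_of_mem _ hq, Or.inr h⟩
      · exact fusym h
  obtain ⟨θ', hs', hf', hrel', hv', hsym'⟩ := IH E₁ f5 f3
  have hEsub : Evars E₁ ⊆ Evars E := f4.trans (Finset.erase_subset _ _)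
  refine ⟨compSub θ₁ θ', ?_, ?_, ?_, ?_, ?_⟩
  · -- Esolve
    intro p hp
    rcases List.mem_cons.1 hp with rfl | hp
    · show (Tm.var X).subst (compSub θ₁ θ') = u.subst (compSub θ₁ θ')
      have h1 : (Tm.var X).subst (compSub θ₁ θ') = u.subst θ' := by
        show (θ₁ X).subst θ' = _
        rw [hθ₁X]
      have h2 : u.subst (compSub θ₁ θ') = u.subst θ' := by
        rw [← Tm.subst_subst, Tm.subst_eq_of_notmem hocc]
      rw [h1, h2]
    · rw [← Tm.subst_subst, ← Tm.subst_subst]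
      exact hs' (p.1.subst θ₁, p.2.subst θ₁) (List.mem_map.2 ⟨p, hp, rfl⟩)
  · -- factoring
    intro τ hτ n
    show ((θ₁ n).subst θ').subst τ = τ n
    rw [Tm.subst_subst]
    have : compSub θ' τ = τ := funext fun k => hf' τ (f2 τ hτ) k
    rw [this]
    have := congrFun (f1 τ hτ) n
    exact this
  · -- relevance
    intro n hn
    have hnX : n ≠ X := fun e => hn (e ▸ f0)
    show (θ₁ n).subst θ' = Tm.var n
    rw [hθ₁n n hnX]
    exact hrel' n fun h => hn (hEsub h)
  · -- vars
    intro n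
    by_cases hnX : n = X
    · subst hnX
      show ((θ₁ n).subst θ').vars ⊆ _
      rw [hθ₁X, Tm.vars_subst]
      intro m hm
      obtain ⟨k, hk, hmk⟩ := Set.mem_iUnion₂.1 hm
      rcases hv' k hmk with h | h
      · exact Or.inl (hEsub h)
      · have : m = k := h
        subst this
        exact Or.inl (fu hk)
    · show ((θ₁ n).subst θ').vars ⊆ _
      rw [hθ₁n n hnX]
      intro m hm
      rcases hv' n hm with h | h
      · exact Or.inl (hEsub h)
      · exact Or.inr h
  · -- symbols
    intro n
    by_cases hnX : n = X
    · subst hnX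
      show ((θ₁ n).subst θ').symbols ⊆ _
      rw [hθ₁X]
      intro f hf
      rcases Tm.symbols_subst θ' u hf with h | h
      · exact fusym h
      · obtain ⟨k, _, hfk⟩ := Set.mem_iUnion₂.1 h
        exact f6 (hsym' k hfk)
    · show ((θ₁ n).subst θ').symbols ⊆ _
      rw [hθ₁n n hnX]
      intro f hf
      exact f6 (hsym' n hf)

theorem unify_core : ∀ (c s : ℕ) (E : List (Tm F × Tm F)), (Evars E).card ≤ c →
    Esize E ≤ s → (∃ τ, Esolve τ E) → ∃ θ, UOK E θ := by
  intro c
  induction c using Nat.strong_induction_on with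
  | _ c IHc =>
  intro s
  induction s using Nat.strong_induction_on with
  | _ s IHs =>
  intro E hc hs hsolv
  classical
  rcases E with _ | ⟨⟨a, b⟩, E'⟩
  · refine ⟨Tm.var, fun p hp => absurd hp List.not_mem_nil, fun τ _ n => rfl,
      fun n _ => rfl, fun n => ?_, fun n => ?_⟩
    · intro m hm
      exact Or.inr hm
    · intro f hf
      exact absurd hf (by simp [Tm.symbols])
  · by_cases hab : a = b
    · -- drop an identical pair
      subst hab
      have hsz : Esize E' < s := by
        have h' : a.tsize + a.tsize + Esize E' ≤ s := by rw [Esize_cons] at hs; exact hs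
        have := Tm.one_le_tsize a
        omega
      have hsub : Evars E' ⊆ Evars ((a, a) :: E') := by
        intro n hn
        obtain ⟨p, hp, h⟩ := mem_Evars.1 hn
        exact mem_Evars.2 ⟨p, List.mem_cons_of_mem _ hp, h⟩
      have hsymsub : Esyms E' ⊆ Esyms ((a, a) :: E') := by
        rintro f ⟨p, hp, h⟩
        exact ⟨p, List.mem_cons_of_mem _ hp, h⟩
      obtain ⟨θ, hsθ, hfθ, hrel, hv, hsym⟩ :=
        IHs (Esize E') hsz E' (le_trans (Finset.card_le_card hsub) hc) le_rfl
          (hsolv.imp fun τ hτ p hp => hτ p (List.mem_cons_of_mem _ hp))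
      refine ⟨θ, ?_, ?_, ?_, ?_, ?_⟩
      · intro p hp
        rcases List.mem_cons.1 hp with rfl | hp
        · rfl
        · exact hsθ p hp
      · exact fun τ hτ => hfθ τ (fun p hp => hτ p (List.mem_cons_of_mem _ hp))
      · exact fun n hn => hrel n fun h => hn (hsub h)
      · exact fun n => (hv n).trans (Set.union_subset_union_left _ (by exact_mod_cast hsub))
      · exact fun n => (hsym n).trans hsymsub
    · cases a with
      | var X =>
        have hbne : b ≠ Tm.var X := fun e => hab (by rw [e])
        have hocc : X ∉ b.vars := by
          intro hX
          obtain ⟨τ, hτ⟩ := hsolv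
          have h1 : τ X = b.subst τ := hτ (Tm.var X, b) (List.mem_cons_self)
          have := Tm.occurs_lt hX hbne τ
          rw [← h1] at this
          exact lt_irrefl _ this
        exact bind_case hocc hsolv fun E₁ hlt hs₁ =>
          IHc (Evars E₁).card (lt_of_lt_of_le hlt hc) (Esize E₁) E₁ le_rfl le_rfl hs₁
      | app f k ts =>
        cases b with
        | var X =>
          have hbne : Tm.app f k ts ≠ Tm.var X := by simp
          have hocc : X ∉ (Tm.app f k ts).vars := by
            intro hX
            obtain ⟨τ, hτ⟩ := hsolv
            have h1 : (Tm.app f k ts).subst τ = τ X :=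
              hτ (Tm.app f k ts, Tm.var X) (List.mem_cons_self)
            have := Tm.occurs_lt hX hbne τ
            rw [h1] at this
            exact lt_irrefl _ this
          have hsolv' : ∃ τ, Esolve τ ((Tm.var X, Tm.app f k ts) :: E') :=
            hsolv.imp fun τ hτ => Esolve_swap.1 hτ
          obtain ⟨θ, hθ⟩ := bind_case hocc hsolv' fun E₁ hlt hs₁ =>
            IHc (Evars E₁).card
              (lt_of_lt_of_le (by rwa [← Evars_swap] at hlt) hc)
              (Esize E₁) E₁ le_rfl le_rfl hs₁
          exact ⟨θ, hθ.swap⟩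
        | app g l ss =>
          obtain ⟨τ₀, hτ₀⟩ := hsolv
          have h0 : (Tm.app f k ts).subst τ₀ = (Tm.app g l ss).subst τ₀ :=
            hτ₀ _ (List.mem_cons_self)
          simp only [Tm.subst] at h0
          injection h0 with hf hk hargs
          subst hf
          subst hk
          set E₂ : List (Tm F × Tm F) := (List.ofFn fun i => (ts i, ss i)) ++ E' with hE₂
          have hiff : ∀ τ, Esolve τ ((Tm.app f k ts, Tm.app f k ss) :: E') ↔ Esolve τ E₂ := by
            intro τ
            constructor
            · intro h p hp
              rcases List.mem_append.1 hp with hp | hp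
              · obtain ⟨i, rfl⟩ := List.mem_ofFn.1 hp
                have h1 := h _ (List.mem_cons_self)
                simp only [Tm.subst] at h1
                injection h1 with _ _ hargs'
                exact congrFun hargs' i
              · exact h p (List.mem_cons_of_mem _ hp)
            · intro h p hp
              rcases List.mem_cons.1 hp with rfl | hp
              · show (Tm.app f k ts).subst τ = (Tm.app f k ss).subst τ
                simp only [Tm.subst]
                congr 1
                funext i
                exact h (ts i, ss i) (List.mem_append_left _ (List.mem_ofFn.2 ⟨i, rfl⟩))
              · exact h p (List.mem_append_right _ hp)
          have hmem : ∀ p ∈ E₂, (p ∈ E' ∨ ∃ i, p = (ts i, ss i)) := by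
            intro p hp
            rcases List.mem_append.1 hp with hp | hp
            · obtain ⟨i, rfl⟩ := List.mem_ofFn.1 hp
              exact Or.inr ⟨i, rfl⟩
            · exact Or.inl hp
          have hsub : Evars E₂ ⊆ Evars ((Tm.app f k ts, Tm.app f k ss) :: E') := by
            intro n hn
            obtain ⟨p, hp, h⟩ := mem_Evars.1 hn
            rcases hmem p hp with hp' | ⟨i, rfl⟩
            · exact mem_Evars.2 ⟨p, List.mem_cons_of_mem _ hp', h⟩
            · refine mem_Evars.2 ⟨(Tm.app f k ts, Tm.app f k ss), List.mem_cons_self, ?_⟩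
              rcases h with h | h
              · exact Or.inl (Set.mem_iUnion.2 ⟨i, h⟩)
              · exact Or.inr (Set.mem_iUnion.2 ⟨i, h⟩)
          have hsymsub : Esyms E₂ ⊆ Esyms ((Tm.app f k ts, Tm.app f k ss) :: E') := by
            rintro x ⟨p, hp, h⟩
            rcases hmem p hp with hp' | ⟨i, rfl⟩
            · exact ⟨p, List.mem_cons_of_mem _ hp', h⟩
            · refine ⟨(Tm.app f k ts, Tm.app f k ss), List.mem_cons_self, ?_⟩
              rcases h with h | h
              · exact Or.inl (Or.inr (Set.mem_iUnion.2 ⟨i, h⟩))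
              · exact Or.inr (Or.inr (Set.mem_iUnion.2 ⟨i, h⟩))
          have hsz : Esize E₂ < Esize ((Tm.app f k ts, Tm.app f k ss) :: E') := by
            have h1 : Esize E₂ = (∑ i, ((ts i).tsize + (ss i).tsize)) + Esize E' := by
              simp [hE₂, Esize, List.map_ofFn, List.sum_ofFn, Function.comp_def]
            have h2 : Esize ((Tm.app f k ts, Tm.app f k ss) :: E') =
                (1 + ∑ i, (ts i).tsize) + (1 + ∑ i, (ss i).tsize) + Esize E' := by
              rw [Esize_cons]; rfl
            have h3 : (∑ i, ((ts i).tsize + (ss i).tsize)) =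
                (∑ i, (ts i).tsize) + (∑ i, (ss i).tsize) := Finset.sum_add_distrib
            omega
          obtain ⟨θ, hsθ, hfθ, hrel, hv, hsym⟩ :=
            IHs (Esize E₂) (lt_of_lt_of_le hsz hs) E₂
              (le_trans (Finset.card_le_card hsub) hc) le_rfl
              ⟨τ₀, (hiff τ₀).1 hτ₀⟩
          refine ⟨θ, (hiff θ).2 hsθ, fun τ hτ => hfθ τ ((hiff τ).1 hτ),
            fun n hn => hrel n fun h => hn (hsub h),
            fun n => (hv n).trans (Set.union_subset_union_left _ (by exact_mod_cast hsub)),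
            fun n => (hsym n).trans hsymsub⟩

theorem zip_solve : ∀ (l₁ l₂ : List (Tm F)), l₁.length = l₂.length → ∀ θ : ℕ → Tm F,
    ((∀ p ∈ l₁.zip l₂, p.1.subst θ = p.2.subst θ) ↔
      l₁.map (Tm.subst θ) = l₂.map (Tm.subst θ)) := by
  intro l₁
  induction l₁ with
  | nil =>
    intro l₂ hl θ
    cases l₂ with
    | nil => simp
    | cons b l₂ => simp at hl
  | cons a l₁ ih =>
    intro l₂ hl θ
    cases l₂ with
    | nil => simp at hl
    | cons b l₂ =>
      simp only [List.zip_cons_cons, List.map_cons, List.cons.injEq]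
      constructor
      · intro h
        refine ⟨h (a, b) (List.mem_cons_self), ?_⟩
        exact (ih l₂ (by simpa using hl) θ).1 fun p hp => h p (List.mem_cons_of_mem _ hp)
      · rintro ⟨h1, h2⟩ p hp
        rcases List.mem_cons.1 hp with rfl | hp
        · exact h1
        · exact (ih l₂ (by simpa using hl) θ).2 h2 p hp

theorem mgu_exists {A B : Atom F Pr} {μ : ℕ → Tm F} (h : UnifiesAtom μ A B) :
    ∃ θ, IsMGUAtom A B θ ∧ (∀ n, (θ n).vars ⊆ (A.vars ∪ B.vars) ∪ {n}) ∧
      (∀ n, (θ n).symbols ⊆ A.symbols ∪ B.symbols) := by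
  have h' : A.subst μ = B.subst μ := h
  have hpred0 := congrArg Atom.pred h'
  have hpred : A.pred = B.pred := hpred0
  have hargs0 := congrArg Atom.args h'
  have hargs : A.args.map (Tm.subst μ) = B.args.map (Tm.subst μ) := hargs0
  have hlen : A.args.length = B.args.length := by
    have := congrArg List.length hargs
    simpa using this
  set E := A.args.zip B.args with hE
  have hunif : ∀ θ : ℕ → Tm F, Esolve θ E ↔ UnifiesAtom θ A B := by
    intro θ
    rw [show Esolve θ E ↔ A.args.map (Tm.subst θ) = B.args.map (Tm.subst θ) from
      zip_solve A.args B.args hlen θ]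
    constructor
    · intro h2
      show Atom.mk A.pred (A.args.map (Tm.subst θ)) = Atom.mk B.pred (B.args.map (Tm.subst θ))
      rw [hpred, h2]
    · intro h2
      have h3 := congrArg Atom.args (h2 : A.subst θ = B.subst θ)
      exact h3
  have hvsub : (↑(Evars E) : Set ℕ) ⊆ A.vars ∪ B.vars := by
    intro n hn
    obtain ⟨p, hp, hc⟩ := mem_Evars.1 hn
    obtain ⟨h1, h2⟩ := List.of_mem_zip hp
    rcases hc with hc | hc
    · exact Or.inl ⟨p.1, h1, hc⟩
    · exact Or.inr ⟨p.2, h2, hc⟩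
  have hssub : Esyms E ⊆ A.symbols ∪ B.symbols := by
    rintro f ⟨p, hp, hc⟩
    obtain ⟨h1, h2⟩ := List.of_mem_zip hp
    rcases hc with hc | hc
    · exact Or.inl ⟨p.1, h1, hc⟩
    · exact Or.inr ⟨p.2, h2, hc⟩
  obtain ⟨θ, hsθ, hfθ, hrel, hv, hsym⟩ :=
    unify_core (Evars E).card (Esize E) E le_rfl le_rfl ⟨μ, (hunif μ).2 h⟩
  refine ⟨θ, ⟨(hunif θ).1 hsθ, ?_, ?_⟩, ?_, ?_⟩
  · intro τ hτ
    exact ⟨τ, funext fun n => (hfθ τ ((hunif τ).2 hτ) n).symm⟩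
  · intro n hn
    exact hrel n fun hmem => hn (hvsub hmem)
  · intro n
    exact (hv n).trans (Set.union_subset_union_left _ hvsub)
  · intro n
    exact (hsym n).trans hssub

theorem queryVars_append {Q₁ Q₂ : Query F Pr} :
    queryVars (Q₁ ++ Q₂) = queryVars Q₁ ∪ queryVars Q₂ := by
  ext n
  simp only [queryVars, Set.mem_setOf_eq, List.mem_append, Set.mem_union]
  constructor
  · rintro ⟨A, (h | h), hn⟩
    · exact Or.inl ⟨A, h, hn⟩
    · exact Or.inr ⟨A, h, hn⟩
  · rintro (⟨A, h, hn⟩ | ⟨A, h, hn⟩)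
    · exact ⟨A, Or.inl h, hn⟩
    · exact ⟨A, Or.inr h, hn⟩

theorem renaming_symbols {t : Tm F} {π : ℕ → ℕ} :
    (t.subst fun n => Tm.var (π n)).symbols ⊆ t.symbols := by
  intro f hf
  rcases Tm.symbols_subst _ t hf with h | h
  · exact h
  · obtain ⟨n, _, hfn⟩ := Set.mem_iUnion₂.1 h
    exact absurd hfn (by simp [Tm.symbols])

theorem renaming_atom_symbols {A : Atom F Pr} {π : ℕ → ℕ} :
    (A.subst fun n => Tm.var (π n)).symbols ⊆ A.symbols := by
  rintro f ⟨u, hu, hf⟩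
  obtain ⟨t, ht, rfl⟩ := List.mem_map.1 hu
  exact ⟨t, ht, renaming_symbols hf⟩

theorem complete_lift (Pg : Program F Pr) :
    ∀ (N : ℕ) (Q : Query F Pr) (τ : ℕ → Tm F) (b : ℕ),
    queryVars Q ⊆ Set.Iio b → QSucc Pg (substQuery τ Q) N →
    ∃ φ σ : ℕ → Tm F, SLDAnswer Pg Q φ ∧
      (∀ n, (φ n).symbols ⊆ progSymbols Pg ∪ querySymbols Q) ∧
      ∀ n < b, (φ n).subst σ = τ n := by
  intro N
  induction N using Nat.strong_induction_on with
  | _ N IH =>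
  intro Q τ b hb hQ
  cases Q with
  | nil =>
    exact ⟨Tm.var, τ, SLDAnswer.success,
      fun n f hf => absurd hf (by simp [Tm.symbols]), fun n _ => rfl⟩
  | cons A G =>
    have hQ' : QSucc Pg (A.subst τ :: substQuery τ G) N := hQ
    cases hQ' with
    | @cons _ _ C δ m k hC hhead hbody hG =>
    set b' := b + cbound C with hb'
    set ρ : ℕ → Tm F := fun n => Tm.var (n + b) with hρdef
    have hρ : IsRenaming ρ := ⟨fun n => n + b, fun x y h => by
      have : x + b = y + b := h
      omega, rfl⟩
    have hAvars : A.vars ⊆ Set.Iio b := fun n hn => hb ⟨A, List.mem_cons_self, hn⟩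
    have hGvars : queryVars G ⊆ Set.Iio b := fun n hn =>
      hb ⟨hn.choose, List.mem_cons_of_mem _ hn.choose_spec.1, hn.choose_spec.2⟩
    -- variables of the renamed clause
    have hcv : ∀ m' ∈ Clause.vars (C.subst ρ), ∃ n ∈ C.vars, m' = n + b := by
      intro m' hm'
      have key : ∀ B : Atom F Pr, m' ∈ (B.subst ρ).vars → ∃ n ∈ B.vars, m' = n + b := by
        intro B hmB
        rw [Atom.vars_subst] at hmB
        obtain ⟨n, hn, hmn⟩ := Set.mem_iUnion₂.1 hmB
        have : m' = n + b := hmn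
        exact ⟨n, hn, this⟩
      rcases hm' with h | h
      · obtain ⟨n, hn, he⟩ := key C.head h
        exact ⟨n, Or.inl hn, he⟩
      · obtain ⟨B', hB', hmB⟩ := h
        obtain ⟨B, hB, rfl⟩ := List.mem_map.1 hB'
        obtain ⟨n, hn, he⟩ := key B hmB
        exact ⟨n, Or.inr ⟨B, hB, hn⟩, he⟩
    have hclause_lo : ∀ m' ∈ Clause.vars (C.subst ρ), b ≤ m' ∧ m' < b' := by
      intro m' hm'
      obtain ⟨n, hn, rfl⟩ := hcv m' hm'
      have := lt_cbound hn
      omega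
    have hdisj : Clause.vars (C.subst ρ) ∩ queryVars (A :: G) = ∅ := by
      ext m'
      simp only [Set.mem_inter_iff, Set.mem_empty_iff_false, iff_false, not_and]
      intro h1 h2
      have := (hclause_lo m' h1).1
      have := hb h2
      simp only [Set.mem_Iio] at this
      omega
    -- the unifier
    set μ : ℕ → Tm F := fun n => if n < b then τ n else δ (n - b) with hμdef
    have hcomp : compSub ρ μ = δ := by
      funext n
      show (Tm.var (n + b)).subst μ = δ n
      show μ (n + b) = δ n
      simp [hμdef]
    have hμτ : ∀ n < b, μ n = τ n := by intro n hn; simp [hμdef, hn]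
    have hheadeq : (C.subst ρ).head = C.head.subst ρ := rfl
    have hunifμ : UnifiesAtom μ A (C.subst ρ).head := by
      show A.subst μ = ((C.subst ρ).head).subst μ
      rw [hheadeq, Atom.subst_subst, hcomp, hhead]
      exact Atom.subst_congr fun n hn => hμτ n (hAvars hn)
    obtain ⟨θ, hmgu, hθv, hθs⟩ := mgu_exists hunifμ
    obtain ⟨η, hη⟩ := hmgu.2.1 μ hunifμ
    -- bounds for the new query
    have hV : A.vars ∪ (C.subst ρ).head.vars ⊆ Set.Iio b' := by
      intro n hn
      rcases hn with h | h
      · have := hAvars h; simp only [Set.mem_Iio] at this ⊢; omega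
      · exact Set.mem_Iio.2 (hclause_lo n (Or.inl h)).2
    have hθvars : ∀ n < b', (θ n).vars ⊆ Set.Iio b' := by
      intro n hn x hx
      rcases hθv n hx with h | h
      · exact hV h
      · have : x = n := h
        exact this ▸ Set.mem_Iio.2 hn
    set Q' : Query F Pr := substQuery θ ((C.subst ρ).body ++ G) with hQ'def
    have hQ'vars : queryVars Q' ⊆ Set.Iio b' := by
      intro x hx
      rw [hQ'def, queryVars_subst] at hx
      obtain ⟨n, hn, hxn⟩ := Set.mem_iUnion₂.1 hx
      have hnb' : n < b' := by
        rw [queryVars_append] at hn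
        rcases hn with h | h
        · obtain ⟨B', hB', hnB⟩ := h
          exact (hclause_lo n (Or.inr ⟨B', hB', hnB⟩)).2
        · have := hGvars h; simp only [Set.mem_Iio] at this; omega
      exact hθvars n hnb' hxn
    -- success of the new query
    have hQsucc' : QSucc Pg (substQuery η Q') (m + k) := by
      have e1 : substQuery η Q' = substQuery μ ((C.subst ρ).body ++ G) := by
        rw [hQ'def, substQuery_subst, ← hη]
      have e2 : substQuery μ ((C.subst ρ).body ++ G) =
          substQuery δ C.body ++ substQuery τ G := by
        show substQuery μ (substQuery ρ C.body ++ G) = _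
        rw [show substQuery μ (substQuery ρ C.body ++ G) =
            substQuery μ (substQuery ρ C.body) ++ substQuery μ G from List.map_append]
        rw [substQuery_subst, hcomp]
        congr 1
        exact substQuery_congr fun n hn => hμτ n (hGvars hn)
      rw [e1, e2]
      exact hbody.append hG
    obtain ⟨φ', σ', hSLD', hsym', hinst'⟩ :=
      IH (m + k) (by omega) Q' η b' hQ'vars hQsucc'
    -- symbols of θ land in the right set
    have hAsym : A.symbols ⊆ querySymbols (A :: G) := fun f hf => ⟨A, List.mem_cons_self, hf⟩
    have hheadsym : (C.subst ρ).head.symbols ⊆ progSymbols Pg := by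
      intro f hf
      rw [hheadeq] at hf
      exact ⟨C, hC, Or.inl (renaming_atom_symbols hf)⟩
    have hθsym : ∀ n, (θ n).symbols ⊆ progSymbols Pg ∪ querySymbols (A :: G) := by
      intro n f hf
      rcases hθs n hf with h | h
      · exact Or.inr (hAsym h)
      · exact Or.inl (hheadsym h)
    have hQ'sym : querySymbols Q' ⊆ progSymbols Pg ∪ querySymbols (A :: G) := by
      intro f hf
      rcases querySymbols_subst hf with h | h
      · obtain ⟨B', hB', hfB⟩ := h
        rcases List.mem_append.1 hB' with h' | h'
        · obtain ⟨B, hB, rfl⟩ := List.mem_map.1 h'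
          exact Or.inl ⟨C, hC, Or.inr ⟨B, hB, renaming_atom_symbols hfB⟩⟩
        · exact Or.inr ⟨B', List.mem_cons_of_mem _ h', hfB⟩
      · obtain ⟨n, _, hfn⟩ := Set.mem_iUnion₂.1 h
        exact hθsym n hfn
    refine ⟨compSub θ φ', σ', SLDAnswer.step A G C ρ θ φ' hC hρ hdisj hmgu hSLD', ?_, ?_⟩
    · intro n f hf
      have : ((θ n).subst φ').symbols ⊆ (θ n).symbols ∪ ⋃ x ∈ (θ n).vars, (φ' x).symbols :=
        Tm.symbols_subst φ' (θ n)
      rcases this hf with h | h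
      · exact hθsym n h
      · obtain ⟨x, _, hfx⟩ := Set.mem_iUnion₂.1 h
        rcases hsym' x hfx with h' | h'
        · exact Or.inl h'
        · exact hQ'sym h'
    · intro n hn
      show ((θ n).subst φ').subst σ' = τ n
      rw [Tm.subst_subst]
      have e1 : (θ n).subst (compSub φ' σ') = (θ n).subst η := by
        refine Tm.subst_congr fun x hx => ?_
        have hxb' : x < b' := Set.mem_Iio.1 (hθvars n (by omega) hx)
        exact hinst' x hxb'
      rw [e1]
      have e2 : (θ n).subst η = μ n := (congrFun hη n).symm
      rw [e2]
      exact hμτ n hn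

theorem stmt_15' {F Pr : Type} (Pg : Program F Pr) (Q : Query F Pr) :
    Entails Pg Q ↔
      ∃ φ σ : ℕ → Tm F, SLDAnswer Pg Q φ ∧
        (∀ n ∈ queryVars Q, (φ n).symbols ⊆ progSymbols Pg ∪ querySymbols Q) ∧
        substQuery σ (substQuery φ Q) = Q := by
  constructor
  · intro h
    obtain ⟨N, hN⟩ := entails_qsucc h
    have hb : queryVars Q ⊆ Set.Iio (qbound Q) := fun n hn => lt_qbound hn
    have hQ : QSucc Pg (substQuery Tm.var Q) N := by rwa [substQuery_var]
    obtain ⟨φ, σ, hSLD, hsym, hinst⟩ := complete_lift Pg N Q Tm.var (qbound Q) hb hQ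
    refine ⟨φ, σ, hSLD, fun n _ => hsym n, ?_⟩
    rw [substQuery_subst]
    have : substQuery (compSub φ σ) Q = substQuery Tm.var Q :=
      substQuery_congr fun n hn => hinst n (lt_qbound hn)
    rw [this, substQuery_var]
  · rintro ⟨φ, σ, hSLD, hsym, hinst⟩
    have h2 := hSLD.sound.subst σ
    rwa [hinst] at h2

/-- soundness-completeness transfer: `P ⊨ Q` iff `Q` is an instance of
`Qφ` for some SLD-computed answer `φ` for `P` and `Q` (whose function symbols occur in
`P` or `Q`). -/
theorem stmt_15 {F Pr : Type} (Pg : Program F Pr) (Q : Query F Pr) :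
    Entails Pg Q ↔
      ∃ φ σ : ℕ → Tm F, SLDAnswer Pg Q φ ∧
        (∀ n ∈ queryVars Q, (φ n).symbols ⊆ progSymbols Pg ∪ querySymbols Q) ∧
        substQuery σ (substQuery φ Q) = Q := by
  exact stmt_15' Pg Q
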